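/- Let ℓ be a positive integer, let S_{2,ℓ} be the double star graph, and let u₁ and u₂ be the two vertices of degree one adjacent to the center u of degree three. Then for every real time τ there is no perfect state transfer from u₁ to u₂ at time τ. -/

import Mathlib

/-!
The vector `e_{u₁} - e_{u₂}` lies in the kernel of `A`, so `U(τ)` fixes it; together with
the symmetry of `U(τ)` this forces the phase of a perfect state transfer from `u₁` to `u₂`
to be `-1`. Then `U(τ)` acts as `-1` on `e_{u₁} + e_{u₂}`, hence on the `A`-invariant space
it generates: the vectors constant on each of the cells `{u}`, `{v}`, pendants of `u`,
pendants of `v`. This space contains an eigenvector for every nonzero root `θ` of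
`θ⁴ - (ℓ + 3)θ² + 2ℓ`, so `τθ` is an odd multiple of `π` for the two positive roots `α`, `β`.
As `α² + β² = ℓ + 3` and `α²β² = 2ℓ`, this gives odd integers `m`, `n` with
`m²n²(ℓ + 3)² = 2ℓ(m² + n²)²`, which is impossible modulo `16`.
-/

open Matrix

noncomputable section

/-- Vertex set of the double star `S_{k,ℓ}`: `Sum.inl 0` is the centre `u`,
`Sum.inl 1` the centre `v`, `Sum.inr (Sum.inl i)` are the pendant neighbours of `u`,
and `Sum.inr (Sum.inr j)` are the pendant neighbours of `v`. -/
abbrev DSVertex (k l : ℕ) := (Fin 2) ⊕ (Fin k ⊕ Fin l)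

/-- The double star graph `S_{k,ℓ}`: the centres `u = Sum.inl 0` and `v = Sum.inl 1` are
adjacent, `u` is adjacent to its `k` pendant vertices and `v` to its `ℓ` pendant vertices. -/
def doubleStar (k l : ℕ) : SimpleGraph (DSVertex k l) :=
  SimpleGraph.fromRel (fun a b =>
    (a = Sum.inl 0 ∧ b = Sum.inl 1) ∨
    (∃ i : Fin k, a = Sum.inl 0 ∧ b = Sum.inr (Sum.inl i)) ∨
    (∃ j : Fin l, a = Sum.inl 1 ∧ b = Sum.inr (Sum.inr j)))

instance (k l : ℕ) : DecidableRel (doubleStar k l).Adj := fun _ _ => Classical.dec _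

/-- The continuous quantum walk `U(t) = exp(itA)`. -/
def qWalk {n : Type*} [Fintype n] [DecidableEq n] (A : Matrix n n ℂ) (t : ℝ) :
    Matrix n n ℂ :=
  NormedSpace.exp ((Complex.I * (t : ℂ)) • A)

/-- Perfect state transfer from `a` to `b` at time `τ` for the quantum walk of `A`:
`U(τ) e_a = γ e_b` for some `γ` with `|γ| = 1`. -/
def IsPST {n : Type*} [Fintype n] [DecidableEq n] (A : Matrix n n ℂ) (a b : n) (τ : ℝ) :
    Prop :=
  ∃ γ : ℂ, ‖γ‖ = 1 ∧ (qWalk A τ).mulVec (Pi.single a 1) = γ • (Pi.single b 1 : n → ℂ)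

section Walk

variable {n : Type*} [Fintype n] [DecidableEq n]

lemma Matrix.exp_mulVec_of_mulVec_eq_smul {M : Matrix n n ℂ} {v : n → ℂ} {μ : ℂ}
    (h : M *ᵥ v = μ • v) : NormedSpace.exp M *ᵥ v = Complex.exp μ • v := by
  -- `exp` depends only on the topology; a normed algebra structure gives access to its series
  let _ : NormedRing (Matrix n n ℂ) := Matrix.linftyOpNormedRing
  let _ : NormedAlgebra ℂ (Matrix n n ℂ) := Matrix.linftyOpNormedAlgebra
  have hpow (j : ℕ) : M ^ j *ᵥ v = μ ^ j • v := by
    induction j with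
    | zero => simp
    | succ j ih => rw [pow_succ, ← mulVec_mulVec, h, mulVec_smul, ih, smul_smul, pow_succ']
  have hM := (NormedSpace.exp_series_hasSum_exp' (𝕂 := ℂ) M).map ((mulVecBilin ℂ ℂ).flip v)
    (Continuous.matrix_mulVec continuous_id continuous_const)
  have hμ := (NormedSpace.exp_series_hasSum_exp' (𝕂 := ℂ) μ).smul_const v
  rw [Complex.exp_eq_exp_ℂ]
  refine hM.unique ?_
  convert hμ using 2 with j
  simp [hpow, smul_smul]

lemma qWalk_mulVec_of_mulVec_eq_smul {A : Matrix n n ℂ} {v : n → ℂ} {θ : ℂ}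
    (h : A *ᵥ v = θ • v) (t : ℝ) : qWalk A t *ᵥ v = Complex.exp (Complex.I * t * θ) • v :=
  Matrix.exp_mulVec_of_mulVec_eq_smul (by rw [smul_mulVec, h, smul_smul])

lemma isSymm_qWalk {A : Matrix n n ℂ} (hA : A.IsSymm) (t : ℝ) : (qWalk A t).IsSymm := by
  rw [IsSymm, qWalk, ← Matrix.exp_transpose, transpose_smul, hA.eq]

lemma commute_qWalk (A : Matrix n n ℂ) (t : ℝ) : Commute (qWalk A t) A :=
  ((Commute.refl A).smul_left _).exp_left

end Walk

section PST

variable {n R : Type*} [Fintype n] [DecidableEq n] [CommRing R]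

lemma mulVec_single_add_single_eq_neg {U : Matrix n n R} (hU : U.IsSymm) {a b : n} (hab : a ≠ b)
    {γ : R} (hfix : U *ᵥ (Pi.single a 1 - Pi.single b 1) = Pi.single a 1 - Pi.single b 1)
    (hpst : U *ᵥ Pi.single a 1 = γ • Pi.single b 1) :
    U *ᵥ (Pi.single a 1 + Pi.single b 1) = -(Pi.single a 1 + Pi.single b 1) := by
  rw [mulVec_sub] at hfix
  have hb : U *ᵥ Pi.single b 1 = γ • Pi.single b 1 - Pi.single a 1 + Pi.single b 1 := by
    rw [← hpst]; linear_combination (norm := module) -hfix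
  have hUba : U b a = γ := by simpa [mulVec_single_one, hab] using congrFun hpst b
  have hUab : U a b = -1 := by simpa [mulVec_single_one, hab] using congrFun hb a
  have hγ : γ = -1 := by rw [← hUba, hU.apply, hUab]
  rw [mulVec_add, hb, hpst, hγ]
  module

end PST

section DoubleStar

variable {k l : ℕ}

@[simp] lemma doubleStar_adj_inl_inl (i j : Fin 2) :
    (doubleStar k l).Adj (Sum.inl i) (Sum.inl j) ↔ i ≠ j := by
  fin_cases i <;> fin_cases j <;> simp [doubleStar]

@[simp] lemma doubleStar_adj_inl_inr_inl (i : Fin 2) (a : Fin k) :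
    (doubleStar k l).Adj (Sum.inl i) (Sum.inr (Sum.inl a)) ↔ i = 0 := by
  fin_cases i <;> simp [doubleStar]

@[simp] lemma doubleStar_adj_inl_inr_inr (i : Fin 2) (b : Fin l) :
    (doubleStar k l).Adj (Sum.inl i) (Sum.inr (Sum.inr b)) ↔ i = 1 := by
  fin_cases i <;> simp [doubleStar]

@[simp] lemma doubleStar_adj_inr_inl (x : Fin k ⊕ Fin l) (i : Fin 2) :
    (doubleStar k l).Adj (Sum.inr x) (Sum.inl i) ↔ (doubleStar k l).Adj (Sum.inl i) (Sum.inr x) :=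
  SimpleGraph.adj_comm _ _ _

@[simp] lemma doubleStar_not_adj_inr_inr (x y : Fin k ⊕ Fin l) :
    ¬ (doubleStar k l).Adj (Sum.inr x) (Sum.inr y) := by
  simp [doubleStar]

variable (k l) in
def blockVec (a b c d : ℂ) : DSVertex k l → ℂ :=
  Sum.elim ![a, b] (Sum.elim (fun _ => c) (fun _ => d))

@[simp] lemma blockVec_add (a b c d a' b' c' d' : ℂ) :
    blockVec k l a b c d + blockVec k l a' b' c' d'
      = blockVec k l (a + a') (b + b') (c + c') (d + d') := by
  funext x; rcases x with i | x | x <;> (try fin_cases i) <;> simp [blockVec]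

@[simp] lemma blockVec_sub (a b c d a' b' c' d' : ℂ) :
    blockVec k l a b c d - blockVec k l a' b' c' d'
      = blockVec k l (a - a') (b - b') (c - c') (d - d') := by
  funext x; rcases x with i | x | x <;> (try fin_cases i) <;> simp [blockVec]

@[simp] lemma smul_blockVec (z a b c d : ℂ) :
    z • blockVec k l a b c d = blockVec k l (z * a) (z * b) (z * c) (z * d) := by
  funext x; rcases x with i | x | x <;> (try fin_cases i) <;> simp [blockVec]

lemma adjMatrix_mulVec_blockVec (a b c d : ℂ) :
    (doubleStar k l).adjMatrix ℂ *ᵥ blockVec k l a b c d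
      = blockVec k l (b + k * c) (a + l * d) a b := by
  funext x
  rcases x with i | x | x <;> (try fin_cases i) <;>
    simp [mulVec, dotProduct, Fintype.sum_sum_type, blockVec, SimpleGraph.adjMatrix_apply]

lemma blockVec_mem_of_adjMatrix_mulVec_mem (hk : k ≠ 0) {S : Submodule ℂ (DSVertex k l → ℂ)}
    (hS : ∀ x ∈ S, (doubleStar k l).adjMatrix ℂ *ᵥ x ∈ S) (h : blockVec k l 0 0 1 0 ∈ S)
    (a b c d : ℂ) : blockVec k l a b c d ∈ S := by
  have hu : blockVec k l 1 0 0 0 ∈ S := by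
    simpa [adjMatrix_mulVec_blockVec, hk] using S.smul_mem (k : ℂ)⁻¹ (hS _ h)
  have hv : blockVec k l 0 1 0 0 ∈ S := by
    simpa [adjMatrix_mulVec_blockVec] using S.sub_mem (hS _ hu) h
  have hp : blockVec k l 0 0 0 1 ∈ S := by
    simpa [adjMatrix_mulVec_blockVec] using S.sub_mem (hS _ hv) hu
  simpa using S.add_mem (S.add_mem (S.add_mem (S.smul_mem a hu) (S.smul_mem b hv))
    (S.smul_mem c h)) (S.smul_mem d hp)

end DoubleStar

section PendantsOfU

variable {l : ℕ}

lemma adjMatrix_mulVec_single_sub_single {k : ℕ} (i j : Fin k) :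
    (doubleStar k l).adjMatrix ℂ *ᵥ
      (Pi.single (Sum.inr (Sum.inl i)) 1 - Pi.single (Sum.inr (Sum.inl j)) 1) = 0 := by
  funext x
  rcases x with x | x | x <;> simp

lemma single_add_single_eq_blockVec :
    (Pi.single (Sum.inr (Sum.inl 0)) 1 + Pi.single (Sum.inr (Sum.inl 1)) 1 : DSVertex 2 l → ℂ)
      = blockVec 2 l 0 0 1 0 := by
  funext x
  rcases x with i | i | x <;> (try fin_cases i) <;> simp [blockVec]

lemma adjMatrix_mulVec_blockVec_of_root {θ : ℂ} (hθ : θ ^ 4 - (l + 3) * θ ^ 2 + 2 * l = 0) :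
    (doubleStar 2 l).adjMatrix ℂ *ᵥ blockVec 2 l (θ ^ 2) (θ ^ 3 - 2 * θ) θ (θ ^ 2 - 2)
      = θ • blockVec 2 l (θ ^ 2) (θ ^ 3 - 2 * θ) θ (θ ^ 2 - 2) := by
  rw [adjMatrix_mulVec_blockVec, smul_blockVec]
  congr 1
  · push_cast; ring
  · linear_combination -hθ
  all_goals ring

lemma exp_eq_neg_one_of_qWalk_mulVec_single_add_single (τ : ℝ)
    (hW : qWalk ((doubleStar 2 l).adjMatrix ℂ) τ *ᵥ
      (Pi.single (Sum.inr (Sum.inl 0)) 1 + Pi.single (Sum.inr (Sum.inl 1)) 1)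
      = -(Pi.single (Sum.inr (Sum.inl 0)) 1 + Pi.single (Sum.inr (Sum.inl 1)) 1))
    {θ : ℂ} (hθ0 : θ ≠ 0) (hθ : θ ^ 4 - (l + 3) * θ ^ 2 + 2 * l = 0) :
    Complex.exp (Complex.I * τ * θ) = -1 := by
  set A := (doubleStar 2 l).adjMatrix ℂ
  set S := Module.End.eigenspace (toLin' (qWalk A τ)) (-1)
  have hS : ∀ x ∈ S, A *ᵥ x ∈ S := fun x hx =>
    Module.End.mapsTo_genEigenspace_of_comm ((commute_qWalk A τ).map toLinAlgEquiv') (-1) 1 hx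
  have hs : blockVec 2 l 0 0 1 0 ∈ S := by
    rw [Module.End.mem_eigenspace_iff, toLin'_apply, ← single_add_single_eq_blockVec, hW,
      neg_one_smul]
  set v := blockVec 2 l (θ ^ 2) (θ ^ 3 - 2 * θ) θ (θ ^ 2 - 2)
  have hneg : qWalk A τ *ᵥ v = -v := by
    simpa [S, Module.End.mem_eigenspace_iff] using
      blockVec_mem_of_adjMatrix_mulVec_mem two_ne_zero hS hs (θ ^ 2) (θ ^ 3 - 2 * θ) θ (θ ^ 2 - 2)
  have hexp : qWalk A τ *ᵥ v = Complex.exp (Complex.I * τ * θ) • v :=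
    qWalk_mulVec_of_mulVec_eq_smul (adjMatrix_mulVec_blockVec_of_root hθ) τ
  have hv : v ≠ 0 := fun h => hθ0 (by simpa [v, blockVec] using congrFun h (Sum.inl 0))
  have hsmul : Complex.exp (Complex.I * τ * θ) • v = (-1 : ℂ) • v := by
    rw [← hexp, hneg, neg_one_smul]
  exact smul_left_injective ℂ hv hsmul

end PendantsOfU

lemma Complex.exists_odd_of_exp_mul_I_eq_neg_one {x : ℝ}
    (h : Complex.exp (x * Complex.I) = -1) : ∃ m : ℤ, Odd m ∧ x = m * Real.pi := by
  have hcos : Real.cos x = -1 := by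
    simpa [Complex.exp_ofReal_mul_I_re] using congrArg Complex.re h
  obtain ⟨k, hk⟩ := Real.cos_eq_neg_one_iff.mp hcos
  exact ⟨2 * k + 1, odd_two_mul_add_one k, by rw [← hk]; push_cast; ring⟩

lemma exists_sq_add_sq_eq_and_sq_mul_sq_eq {s p : ℝ} (hs : 0 < s) (hp : 0 < p)
    (hdisc : 4 * p ≤ s ^ 2) :
    ∃ α β : ℝ, α ≠ 0 ∧ β ≠ 0 ∧ α ^ 2 + β ^ 2 = s ∧ α ^ 2 * β ^ 2 = p := by
  set d := √(s ^ 2 - 4 * p)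
  have hd : d ^ 2 = s ^ 2 - 4 * p := Real.sq_sqrt (by linarith)
  have hd0 : 0 ≤ d := Real.sqrt_nonneg _
  have hds : d < s := by nlinarith
  have hy₁ : 0 < (s + d) / 2 := by linarith
  have hy₂ : 0 < (s - d) / 2 := by linarith
  refine ⟨√((s + d) / 2), √((s - d) / 2), (Real.sqrt_pos.2 hy₁).ne', (Real.sqrt_pos.2 hy₂).ne',
    ?_, ?_⟩ <;> rw [Real.sq_sqrt hy₁.le, Real.sq_sqrt hy₂.le]
  · ring
  · linear_combination (-1 / 4) * hd

lemma sq_mul_sq_mul_sq_eq_of_mul_eq_mul_pi {α β τ s p : ℝ} {m n : ℤ}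
    (hsum : α ^ 2 + β ^ 2 = s) (hprod : α ^ 2 * β ^ 2 = p) (hα : τ * α = m * Real.pi)
    (hβ : τ * β = n * Real.pi) :
    (m : ℝ) ^ 2 * n ^ 2 * s ^ 2 = p * (m ^ 2 + n ^ 2) ^ 2 := by
  have h : ((m : ℝ) ^ 2 * n ^ 2 * s ^ 2 - p * (m ^ 2 + n ^ 2) ^ 2) * Real.pi ^ 4 = 0 :=
    calc _ = (m * Real.pi) ^ 2 * (n * Real.pi) ^ 2 * s ^ 2
          - p * ((m * Real.pi) ^ 2 + (n * Real.pi) ^ 2) ^ 2 := by ring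
      _ = τ ^ 4 * ((α ^ 2 * β ^ 2) * s ^ 2 - p * (α ^ 2 + β ^ 2) ^ 2) := by
        rw [← hα, ← hβ]; ring
      _ = 0 := by rw [hsum, hprod]; ring
  rw [mul_eq_zero, or_iff_left (pow_ne_zero 4 Real.pi_ne_zero), sub_eq_zero] at h
  exact h

lemma Int.sq_mul_sq_mul_sq_ne (l : ℤ) {m n : ℤ} (hm : Odd m) (hn : Odd n) :
    m ^ 2 * n ^ 2 * (l + 3) ^ 2 ≠ 2 * l * (m ^ 2 + n ^ 2) ^ 2 := by
  obtain ⟨a, rfl⟩ := hm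
  obtain ⟨b, rfl⟩ := hn
  intro h
  have h16 := congrArg (Int.cast : ℤ → ZMod 16) h
  push_cast at h16
  -- odd squares are `1 mod 8`, so modulo `16` this reads `m²n²(l + 3)² ≡ 8l` with `m²n²` odd
  exact (by decide : ∀ a b l : ZMod 16, (2 * a + 1) ^ 2 * (2 * b + 1) ^ 2 * (l + 3) ^ 2
    ≠ 2 * l * ((2 * a + 1) ^ 2 + (2 * b + 1) ^ 2) ^ 2) _ _ _ h16

/-- in `S_{2,ℓ}` there is no perfect state transfer between the two pendant
vertices adjacent to the centre of degree three at any time. -/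
theorem no_pst_S2l_pendants (l : ℕ) (hl : 0 < l) (τ : ℝ) :
    ¬ IsPST ((doubleStar 2 l).adjMatrix ℂ)
        (Sum.inr (Sum.inl 0)) (Sum.inr (Sum.inl 1)) τ := by
  rintro ⟨γ, -, hpst⟩
  have hfix := qWalk_mulVec_of_mulVec_eq_smul (θ := 0)
    (by rw [zero_smul]; exact adjMatrix_mulVec_single_sub_single (l := l) (0 : Fin 2) 1) τ
  rw [mul_zero, Complex.exp_zero, one_smul] at hfix
  have hsym := mulVec_single_add_single_eq_neg
    (isSymm_qWalk (SimpleGraph.isSymm_adjMatrix _) τ) (by simp) hfix hpst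
  have hroot (θ : ℝ) (hθ0 : θ ≠ 0) (hθ : θ ^ 4 - (l + 3) * θ ^ 2 + 2 * l = 0) :
      ∃ m : ℤ, Odd m ∧ τ * θ = m * Real.pi := by
    refine Complex.exists_odd_of_exp_mul_I_eq_neg_one ?_
    rw [← exp_eq_neg_one_of_qWalk_mulVec_single_add_single τ hsym (θ := θ)
      (by exact_mod_cast hθ0) (by exact_mod_cast hθ)]
    push_cast; ring_nf
  obtain ⟨α, β, hα0, hβ0, hsum, hprod⟩ := exists_sq_add_sq_eq_and_sq_mul_sq_eq (s := l + 3)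
    (p := 2 * l) (by positivity) (by positivity) (by nlinarith [sq_nonneg ((l : ℝ) - 1)])
  obtain ⟨m, hm, hαm⟩ := hroot α hα0 (by linear_combination α ^ 2 * hsum - hprod)
  obtain ⟨n, hn, hβn⟩ := hroot β hβ0 (by linear_combination β ^ 2 * hsum - hprod)
  apply Int.sq_mul_sq_mul_sq_ne l hm hn
  exact_mod_cast sq_mul_sq_mul_sq_eq_of_mul_eq_mul_pi hsum hprod hαm hβn
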